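/- Under the stationarity conditions m̄ = m - D ∇_m L(v̄) and d̄ = (d^{-1} + 2 ∇_d L(v̄))^{-1} (element-wise), and assuming H := ∇²L(v̄) + blockdiag(D^{-1}, (1/2)(D^{-1} + 2 diag(∇_d L(v̄)))²) is invertible, the Jacobian J = ∇_θ v̄(θ) of the map θ = (m, d) ↦ v̄(θ) satisfies J = [[D^{-1}, 0], [-diag(∇_m L(v̄)) D^{-1}, (1/2) D^{-2}]] · H^{-1}. -/

import Mathlib

/-- Direction vector in `ℝ^d × ℝ^d` indexed by `Fin d ⊕ Fin d`. -/
def dirVec {d : ℕ} : Fin d ⊕ Fin d → (Fin d → ℝ) × (Fin d → ℝ)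
  | Sum.inl i => (Pi.single i 1, 0)
  | Sum.inr i => (0, Pi.single i 1)

/-- Component of a vector in `ℝ^d × ℝ^d` indexed by `Fin d ⊕ Fin d`. -/
def compOf {d : ℕ} (v : (Fin d → ℝ) × (Fin d → ℝ)) : Fin d ⊕ Fin d → ℝ
  | Sum.inl i => v.1 i
  | Sum.inr i => v.2 i

/-!
Differentiate each stationarity equation along the coordinate direction `a` of `θ`. By the chain
rule the derivative of `∇_c L(v̄(θ))` is `∑ b, J a b * ∇²L b c` (this needs symmetry of the
Hessian), so the differentiated equations are exactly row `a` of `J * H = G`. The equation for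
`d̄` is differentiated in the form `X ^ 2 * d̄ = X` with `X = d⁻¹ + 2 ∇_d L(v̄)`, which also holds
where `X` vanishes and `d̄ = X⁻¹` is only a junk value. Invertibility of `H` gives `J = G * H⁻¹`.
-/

open Matrix

noncomputable def coordCLM {d : ℕ} : Fin d ⊕ Fin d → ((Fin d → ℝ) × (Fin d → ℝ)) →L[ℝ] ℝ
  | Sum.inl i => (ContinuousLinearMap.proj i).comp (ContinuousLinearMap.fst ℝ _ _)
  | Sum.inr i => (ContinuousLinearMap.proj i).comp (ContinuousLinearMap.snd ℝ _ _)

section Coordinates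

variable {d : ℕ}

@[simp] theorem coordCLM_apply (c : Fin d ⊕ Fin d) (v : (Fin d → ℝ) × (Fin d → ℝ)) :
    coordCLM c v = compOf v c := by
  cases c <;> rfl

theorem sum_compOf_smul_dirVec (w : (Fin d → ℝ) × (Fin d → ℝ)) :
    ∑ b, compOf w b • dirVec b = w := by
  rw [Fintype.sum_sum_type]
  refine Prod.ext ?_ ?_ <;>
    simp [dirVec, compOf, Prod.fst_sum, Prod.snd_sum, ← Pi.single_smul, Finset.univ_sum_single]

theorem ContinuousLinearMap.apply_eq_sum_compOf_mul (φ : (Fin d → ℝ) × (Fin d → ℝ) →L[ℝ] ℝ)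
    (w : (Fin d → ℝ) × (Fin d → ℝ)) : φ w = ∑ c, compOf w c * φ (dirVec c) := by
  conv_lhs => rw [← sum_compOf_smul_dirVec w]
  simp [map_sum]

theorem ContinuousLinearMap.eq_sum_apply_dirVec_smul_coordCLM
    (φ : (Fin d → ℝ) × (Fin d → ℝ) →L[ℝ] ℝ) : φ = ∑ c, φ (dirVec c) • coordCLM c :=
  ContinuousLinearMap.ext fun w => by simp [φ.apply_eq_sum_compOf_mul w, mul_comm]

theorem fderiv_fderiv_apply_dirVec_comm {L : (Fin d → ℝ) × (Fin d → ℝ) → ℝ}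
    (hL : ∀ v, DifferentiableAt ℝ L v) {x : (Fin d → ℝ) × (Fin d → ℝ)}
    (hL2 : ∀ a, DifferentiableAt ℝ (fun w => fderiv ℝ L w (dirVec a)) x) (a b : Fin d ⊕ Fin d) :
    fderiv ℝ (fun w => fderiv ℝ L w (dirVec a)) x (dirVec b)
      = fderiv ℝ (fun w => fderiv ℝ L w (dirVec b)) x (dirVec a) := by
  have hL' : DifferentiableAt ℝ (fderiv ℝ L) x := by
    rw [funext fun w => (fderiv ℝ L w).eq_sum_apply_dirVec_smul_coordCLM]
    exact DifferentiableAt.fun_sum fun c _ => (hL2 c).smul_const (coordCLM c)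
  have partial_eq (c e : Fin d ⊕ Fin d) : fderiv ℝ (fun w => fderiv ℝ L w (dirVec c)) x (dirVec e)
      = fderiv ℝ (fderiv ℝ L) x (dirVec e) (dirVec c) := by
    rw [fderiv_clm_apply hL' (differentiableAt_const _)]
    simp
  rw [partial_eq, partial_eq,
    second_derivative_symmetric (fun y => (hL y).hasFDerivAt) hL'.hasFDerivAt]

theorem compOf_dirVec (a c : Fin d ⊕ Fin d) :
    compOf (dirVec a) c = (1 : Matrix (Fin d ⊕ Fin d) (Fin d ⊕ Fin d) ℝ) a c := by
  rcases a with j | j <;> rcases c with i | i <;>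
    simp [dirVec, compOf, one_apply, Pi.single_apply, eq_comm]

end Coordinates

section BlockMatrices

variable {ι R : Type*} [Fintype ι] [DecidableEq ι] [Field R]

theorem fromBlocks_diagonal_half_sq_eq_diagonal (p q : ι → R) :
    fromBlocks (diagonal p) 0 0 ((1 / 2 : R) • (diagonal p + (2 : R) • diagonal q) ^ 2)
      = diagonal (Sum.elim p fun i => 1 / 2 * (p i + 2 * q i) ^ 2) := by
  rw [← fromBlocks_diagonal, ← diagonal_smul, diagonal_add, diagonal_pow, ← diagonal_smul]
  rfl

variable (p g : ι → R) (a : ι ⊕ ι) (i : ι)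

theorem fromBlocks_neg_diagonal_mul_apply_inl :
    fromBlocks (diagonal p) 0 (-(diagonal g * diagonal p)) ((1 / 2 : R) • diagonal p ^ 2)
        a (Sum.inl i)
      = p i * ((1 : Matrix (ι ⊕ ι) (ι ⊕ ι) R) a (Sum.inl i)
        - (1 : Matrix (ι ⊕ ι) (ι ⊕ ι) R) a (Sum.inr i) * g i) := by
  rcases a with j | j <;> by_cases h : j = i <;> simp [one_apply, h, mul_comm]

theorem fromBlocks_neg_diagonal_mul_apply_inr :
    fromBlocks (diagonal p) 0 (-(diagonal g * diagonal p)) ((1 / 2 : R) • diagonal p ^ 2)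
        a (Sum.inr i)
      = 1 / 2 * p i ^ 2 * (1 : Matrix (ι ⊕ ι) (ι ⊕ ι) R) a (Sum.inr i) := by
  rcases a with j | j <;> by_cases h : j = i <;> simp [one_apply, diagonal_pow, h]

end BlockMatrices

theorem HasFDerivAt.eq_neg_sq_smul_of_eq_inv {𝕜 E : Type*} [NontriviallyNormedField 𝕜]
    [NormedAddCommGroup E] [NormedSpace 𝕜 E] {f g : E → 𝕜} {f' g' : E →L[𝕜] 𝕜} {x : E}
    (hfg : ∀ y, f y = (g y)⁻¹) (hf : HasFDerivAt f f' x) (hg : HasFDerivAt g g' x) :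
    g' = -(g x ^ 2) • f' := by
  -- differentiate `g ^ 2 * f = g`, which holds also where `g` vanishes
  have hsq := (hg.pow 2).fun_mul hf
  rw [funext fun y => show g y ^ 2 * f y = g y by rw [hfg, sq, mul_self_mul_inv]] at hsq
  ext v
  have hv := congrArg (· v) (hg.unique hsq)
  simp only [Nat.add_one_sub_one, pow_one, nsmul_eq_mul, Nat.cast_ofNat, _root_.add_apply,
    _root_.smul_apply, smul_eq_mul] at hv
  simp only [FunLike.coe_smul, Pi.smul_apply, smul_eq_mul]
  rcases eq_or_ne (g x) 0 with h0 | h0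
  · simpa [h0] using hv
  · have hfx : f x * g x = 1 := by rw [hfg, inv_mul_cancel₀ h0]
    linear_combination -hv - 2 * g' v * hfx

section Stationarity

variable {d : ℕ} {L : (Fin d → ℝ) × (Fin d → ℝ) → ℝ}
  {vbar : (Fin d → ℝ) × (Fin d → ℝ) → (Fin d → ℝ) × (Fin d → ℝ)}
  {θ : (Fin d → ℝ) × (Fin d → ℝ)} {i : Fin d}

theorem compOf_fderiv_apply_inl_of_stationary
    (hstat : ∀ θ : (Fin d → ℝ) × (Fin d → ℝ),
      (vbar θ).1 i = θ.1 i - θ.2 i * fderiv ℝ L (vbar θ) (dirVec (Sum.inl i)))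
    (hv : DifferentiableAt ℝ vbar θ)
    (hg : DifferentiableAt ℝ (fun w => fderiv ℝ L w (dirVec (Sum.inl i))) (vbar θ))
    (u : (Fin d → ℝ) × (Fin d → ℝ)) :
    compOf (fderiv ℝ vbar θ u) (Sum.inl i)
      + θ.2 i * fderiv ℝ (fun w => fderiv ℝ L w (dirVec (Sum.inl i))) (vbar θ) (fderiv ℝ vbar θ u)
      = compOf u (Sum.inl i) - compOf u (Sum.inr i) * fderiv ℝ L (vbar θ) (dirVec (Sum.inl i)) := by
  have hlhs := (coordCLM (Sum.inl i)).hasFDerivAt.comp θ hv.hasFDerivAt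
  have hrhs := (coordCLM (Sum.inl i)).hasFDerivAt.sub
    ((coordCLM (Sum.inr i)).hasFDerivAt.fun_mul (hg.hasFDerivAt.comp θ hv.hasFDerivAt))
  have := congrArg (· u) <| hlhs.unique <|
    hrhs.congr_of_eventuallyEq (.of_forall fun θ => by simp [compOf, hstat θ])
  simp only [ContinuousLinearMap.comp_apply, coordCLM_apply, compOf, Function.comp_apply,
    _root_.sub_apply, _root_.add_apply, _root_.smul_apply, smul_eq_mul] at this
  simp only [compOf]
  linear_combination this

theorem compOf_fderiv_apply_inr_of_stationary
    (hstat : ∀ θ : (Fin d → ℝ) × (Fin d → ℝ),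
      (vbar θ).2 i = ((θ.2 i)⁻¹ + 2 * fderiv ℝ L (vbar θ) (dirVec (Sum.inr i)))⁻¹)
    (hθ : θ.2 i ≠ 0) (hv : DifferentiableAt ℝ vbar θ)
    (hg : DifferentiableAt ℝ (fun w => fderiv ℝ L w (dirVec (Sum.inr i))) (vbar θ))
    (u : (Fin d → ℝ) × (Fin d → ℝ)) :
    2 * fderiv ℝ (fun w => fderiv ℝ L w (dirVec (Sum.inr i))) (vbar θ) (fderiv ℝ vbar θ u)
      + ((θ.2 i)⁻¹ + 2 * fderiv ℝ L (vbar θ) (dirVec (Sum.inr i))) ^ 2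
        * compOf (fderiv ℝ vbar θ u) (Sum.inr i)
      = compOf u (Sum.inr i) / θ.2 i ^ 2 := by
  have hX := ((hasFDerivAt_inv hθ).comp θ (coordCLM (Sum.inr i)).hasFDerivAt).add
    ((hg.hasFDerivAt.comp θ hv.hasFDerivAt).const_mul 2)
  have hsnd := (coordCLM (Sum.inr i)).hasFDerivAt.comp θ hv.hasFDerivAt
  have := congrArg (· u) (hsnd.eq_neg_sq_smul_of_eq_inv (fun θ => by simp [compOf, hstat θ]) hX)
  simp only [_root_.add_apply, ContinuousLinearMap.comp_apply, coordCLM_apply, compOf,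
    ContinuousLinearMap.toSpanSingleton_apply, smul_eq_mul, mul_neg, _root_.smul_apply,
    Function.comp_apply, Pi.add_apply, neg_smul, _root_.neg_apply] at this
  simp only [compOf]
  linear_combination this

end Stationarity

/-- Implicit Jacobian formula (Lemma 1 of iBaML): if `v̄(θ) = (m̄(θ), d̄(θ))`
satisfies the stationarity conditions `m̄ = m - D ∇_m L(v̄)` and
`d̄ = (d⁻¹ + 2∇_d L(v̄))⁻¹` (element-wise) for all `θ = (m, d)`, and
`H = ∇²L(v̄) + blockdiag(D⁻¹, (1/2)(D⁻¹ + 2 diag(∇_d L(v̄)))²)` is invertible,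
then the Jacobian `J = ∇_θ v̄(θ)` satisfies
`J = [[D⁻¹, 0], [-diag(∇_m L(v̄)) D⁻¹, (1/2) D⁻²]] H⁻¹`. -/
theorem implicit_bayesian_jacobian {d : ℕ}
    (L : (Fin d → ℝ) × (Fin d → ℝ) → ℝ)
    (vbar : (Fin d → ℝ) × (Fin d → ℝ) → (Fin d → ℝ) × (Fin d → ℝ))
    (hvbar : ∀ θ, DifferentiableAt ℝ vbar θ)
    (hL : ∀ v, DifferentiableAt ℝ L v)
    (hL2 : ∀ v a, DifferentiableAt ℝ (fun w => fderiv ℝ L w (dirVec a)) v)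
    (hstat_m : ∀ θ : (Fin d → ℝ) × (Fin d → ℝ), ∀ i,
      (vbar θ).1 i = θ.1 i - θ.2 i * fderiv ℝ L (vbar θ) (dirVec (Sum.inl i)))
    (hstat_d : ∀ θ : (Fin d → ℝ) × (Fin d → ℝ), ∀ i,
      (vbar θ).2 i = ((θ.2 i)⁻¹ + 2 * fderiv ℝ L (vbar θ) (dirVec (Sum.inr i)))⁻¹)
    (m dvec : Fin d → ℝ) (hd : ∀ i, 0 < dvec i)
    (Hess H G J : Matrix (Fin d ⊕ Fin d) (Fin d ⊕ Fin d) ℝ)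
    (hHess : ∀ a b, Hess a b =
      fderiv ℝ (fun w => fderiv ℝ L w (dirVec a)) (vbar (m, dvec)) (dirVec b))
    (hH : H = Hess + Matrix.fromBlocks
      (Matrix.diagonal fun i => (dvec i)⁻¹) (0 : Matrix (Fin d) (Fin d) ℝ) 0
      ((1 / 2 : ℝ) • ((Matrix.diagonal fun i => (dvec i)⁻¹) +
        (2 : ℝ) • Matrix.diagonal
          (fun i => fderiv ℝ L (vbar (m, dvec)) (dirVec (Sum.inr i)))) ^ 2))
    (hG : G = Matrix.fromBlocks
      (Matrix.diagonal fun i => (dvec i)⁻¹) (0 : Matrix (Fin d) (Fin d) ℝ)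
      (-(Matrix.diagonal
          (fun i => fderiv ℝ L (vbar (m, dvec)) (dirVec (Sum.inl i))) *
        Matrix.diagonal fun i => (dvec i)⁻¹))
      ((1 / 2 : ℝ) • (Matrix.diagonal fun i => (dvec i)⁻¹) ^ 2))
    (hJ : ∀ a b, J a b = compOf (fderiv ℝ vbar (m, dvec) (dirVec a)) b)
    (hinv : IsUnit H) :
    J = G * H⁻¹ := by
  have hv := hvbar (m, dvec)
  -- chain rule; the Hessian enters transposed, hence the symmetry lemma
  have hJHess (a c : Fin d ⊕ Fin d) : fderiv ℝ (fun w => fderiv ℝ L w (dirVec c)) (vbar (m, dvec))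
      (fderiv ℝ vbar (m, dvec) (dirVec a)) = (J * Hess) a c := by
    rw [ContinuousLinearMap.apply_eq_sum_compOf_mul, mul_apply]
    refine Finset.sum_congr rfl fun b _ => ?_
    rw [hJ, hHess, fderiv_fderiv_apply_dirVec_comm hL (hL2 _)]
  have hJH : J * H = G := by
    rw [hH, fromBlocks_diagonal_half_sq_eq_diagonal, hG, Matrix.mul_add]
    ext a (i | i)
    · have hrow := compOf_fderiv_apply_inl_of_stationary (fun θ => hstat_m θ i) hv
        (hL2 _ _) (dirVec a)
      rw [← hJ, hJHess, compOf_dirVec, compOf_dirVec] at hrow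
      have hdi : dvec i ≠ 0 := (hd i).ne'
      dsimp only at hrow
      rw [Matrix.add_apply, mul_diagonal, Sum.elim_inl, fromBlocks_neg_diagonal_mul_apply_inl]
      field_simp
      linear_combination hrow
    · have hrow := compOf_fderiv_apply_inr_of_stationary (fun θ => hstat_d θ i) (hd i).ne' hv
        (hL2 _ _) (dirVec a)
      rw [← hJ, hJHess, compOf_dirVec] at hrow
      dsimp only at hrow
      rw [Matrix.add_apply, mul_diagonal, Sum.elim_inr, fromBlocks_neg_diagonal_mul_apply_inr]
      linear_combination hrow / 2
  rw [← hJH, mul_nonsing_inv_cancel_right _ _ ((isUnit_iff_isUnit_det H).mp hinv)]
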